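/- arXiv:2603.08330 — 3 statements merged into one kernel-verified Lean document; each statement's English description precedes it below -/
import Mathlib

section
/- Let U ⊆ ℝ³ be open and let u : U → ℝ be C² with Tu = ∂_t u ≡ 1 on U. Then at every point of U where ‖∇_H u‖ ≠ 0, the horizontal Gauss curvature and the symplectic distortion of the level surface of u satisfy K = (4/‖∇_H u‖)·Q. In particular, K vanishes at such a point if and only if Q vanishes there. -/
/-- The Heisenberg vector field `X = ∂ₓ + 2y ∂ₜ` applied to `u`. -/
noncomputable def Xd (u : ℝ × ℝ × ℝ → ℝ) (p : ℝ × ℝ × ℝ) : ℝ :=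
  fderiv ℝ u p (1, 0, 2 * p.2.1)

/-- The Heisenberg vector field `Y = ∂_y − 2x ∂ₜ` applied to `u`. -/
noncomputable def Yd (u : ℝ × ℝ × ℝ → ℝ) (p : ℝ × ℝ × ℝ) : ℝ :=
  fderiv ℝ u p (0, 1, -(2 * p.1))

/-- The Reeb vector field `T = ∂ₜ` applied to `u`. -/
noncomputable def Td (u : ℝ × ℝ × ℝ → ℝ) (p : ℝ × ℝ × ℝ) : ℝ :=
  fderiv ℝ u p (0, 0, 1)

/-- The norm of the horizontal gradient `‖∇_H u‖ = √((Xu)² + (Yu)²)`. -/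
noncomputable def gradH (u : ℝ × ℝ × ℝ → ℝ) (p : ℝ × ℝ × ℝ) : ℝ :=
  Real.sqrt ((Xd u p) ^ 2 + (Yd u p) ^ 2)

/-- The horizontal mean curvature `H_u = X(Xu/‖∇_H u‖) + Y(Yu/‖∇_H u‖)`. -/
noncomputable def Hmean (u : ℝ × ℝ × ℝ → ℝ) (p : ℝ × ℝ × ℝ) : ℝ :=
  Xd (fun z => Xd u z / gradH u z) p + Yd (fun z => Yd u z / gradH u z) p

/-- The derivative along `E₁ = −q̄·X + p̄·Y` of a function `v`. -/
noncomputable def E1d (u v : ℝ × ℝ × ℝ → ℝ) (p : ℝ × ℝ × ℝ) : ℝ :=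
  -(Yd u p / gradH u p) * Xd v p + (Xd u p / gradH u p) * Yd v p

/-- The horizontal Gauss curvature `K_u = −4E₁(Tu/‖∇_H u‖) − 16(Tu/‖∇_H u‖)²`. -/
noncomputable def Kgauss (u : ℝ × ℝ × ℝ → ℝ) (p : ℝ × ℝ × ℝ) : ℝ :=
  -4 * E1d u (fun z => Td u z / gradH u z) p - 16 * (Td u p / gradH u p) ^ 2

/-- The symplectic distortion `Q_u = X(Yu/‖∇_H u‖) − Y(Xu/‖∇_H u‖)`. -/
noncomputable def Qdist (u : ℝ × ℝ × ℝ → ℝ) (p : ℝ × ℝ × ℝ) : ℝ :=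
  Xd (fun z => Yd u z / gradH u z) p - Yd (fun z => Xd u z / gradH u z) p

/-- The Heisenberg dilation `D_δ(x,y,t) = (δx, δy, δ²t)`. -/
def Ddil (δ : ℝ) (p : ℝ × ℝ × ℝ) : ℝ × ℝ × ℝ :=
  (δ * p.1, δ * p.2.1, δ ^ 2 * p.2.2)

/-!
The commutator `[X, Y] = -4T` turns `X(Yu) - Y(Xu)` into `-4 Tu`. Writing `g = ‖∇_H u‖`, the
quotient rule gives `Q = (E₁g - 4 Tu)/g`, while `Tu ≡ 1` near the point kills the derivative of
`Tu` in `E₁(Tu/g) = -E₁g/g²`, so `K = 4(E₁g - 4)/g² = (4/g) Q`.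
-/

open Filter Topology VectorField

theorem fderiv_div_apply {𝕜 E : Type*} [NontriviallyNormedField 𝕜] [NormedAddCommGroup E]
    [NormedSpace 𝕜 E] {f g : E → 𝕜} {x : E} (hf : DifferentiableAt 𝕜 f x)
    (hg : DifferentiableAt 𝕜 g x) (hx : g x ≠ 0) (v : E) :
    fderiv 𝕜 (fun z => f z / g z) x v
      = (fderiv 𝕜 f x v * g x - f x * fderiv 𝕜 g x v) / g x ^ 2 := by
  simp only [div_eq_mul_inv]
  rw [(hf.hasFDerivAt.fun_mul (d := fun z => (g z)⁻¹)
    ((hasDerivAt_inv hx).comp_hasFDerivAt x hg.hasFDerivAt)).fderiv]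
  simp only [add_apply, smul_apply, smul_eq_mul]
  field_simp
  ring

-- `Xd u p = fderiv ℝ u p (heisX p)` and `Yd u p = fderiv ℝ u p (heisY p)` definitionally.
def heisX (p : ℝ × ℝ × ℝ) : ℝ × ℝ × ℝ := (1, 0, 2 * p.2.1)

def heisY (p : ℝ × ℝ × ℝ) : ℝ × ℝ × ℝ := (0, 1, -(2 * p.1))

lemma differentiable_heisX : Differentiable ℝ heisX := by
  unfold heisX; fun_prop

lemma differentiable_heisY : Differentiable ℝ heisY := by
  unfold heisY; fun_prop

lemma fderiv_heisX_apply (p v : ℝ × ℝ × ℝ) : fderiv ℝ heisX p v = (0, 0, 2 * v.2.1) := by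
  unfold heisX
  simp (disch := fun_prop) [DifferentiableAt.fderiv_prodMk, fderiv_const_mul]
  rw [fderiv.fst differentiableAt_snd, fderiv_snd]
  rfl

lemma fderiv_heisY_apply (p v : ℝ × ℝ × ℝ) : fderiv ℝ heisY p v = (0, 0, -(2 * v.1)) := by
  unfold heisY
  simp (disch := fun_prop) [DifferentiableAt.fderiv_prodMk, fderiv_const_mul, fderiv_fst]

lemma lieBracket_heisX_heisY (p : ℝ × ℝ × ℝ) :
    lieBracket ℝ heisX heisY p = (0, 0, -4) := by
  simp only [lieBracket, fderiv_heisX_apply, fderiv_heisY_apply, heisX, heisY]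
  norm_num

section

variable {u f g : ℝ × ℝ × ℝ → ℝ} {p : ℝ × ℝ × ℝ}

lemma Xd_Yd_sub_Yd_Xd (hu : ContDiffAt ℝ 2 u p) : Xd (Yd u) p - Yd (Xd u) p = -4 * Td u p := by
  have h := fderiv_apply_lieBracket hu (by simp) (V := heisX) (W := heisY)
    differentiable_heisY.differentiableAt differentiable_heisX.differentiableAt
  have hscale : ((0, 0, -4) : ℝ × ℝ × ℝ) = (-4 : ℝ) • ((0, 0, 1) : ℝ × ℝ × ℝ) := by simp
  rw [lieBracket_heisX_heisY, hscale, map_smul] at h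
  exact h.symm

lemma differentiableAt_Xd (hu : ContDiffAt ℝ 2 u p) : DifferentiableAt ℝ (Xd u) p :=
  ((hu.fderiv_right (m := 1) (by norm_num)).differentiableAt one_ne_zero).clm_apply
    differentiable_heisX.differentiableAt

lemma differentiableAt_Yd (hu : ContDiffAt ℝ 2 u p) : DifferentiableAt ℝ (Yd u) p :=
  ((hu.fderiv_right (m := 1) (by norm_num)).differentiableAt one_ne_zero).clm_apply
    differentiable_heisY.differentiableAt

lemma differentiableAt_gradH (hu : ContDiffAt ℝ 2 u p) (hg : gradH u p ≠ 0) :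
    DifferentiableAt ℝ (gradH u) p :=
  (((differentiableAt_Xd hu).pow 2).add ((differentiableAt_Yd hu).pow 2)).sqrt
    fun h => hg <| by rw [gradH, show Xd u p ^ 2 + Yd u p ^ 2 = 0 from h, Real.sqrt_zero]

lemma Xd_div (hf : DifferentiableAt ℝ f p) (hg : DifferentiableAt ℝ g p) (hp : g p ≠ 0) :
    Xd (fun z => f z / g z) p = (Xd f p * g p - f p * Xd g p) / g p ^ 2 :=
  fderiv_div_apply hf hg hp _

lemma Yd_div (hf : DifferentiableAt ℝ f p) (hg : DifferentiableAt ℝ g p) (hp : g p ≠ 0) :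
    Yd (fun z => f z / g z) p = (Yd f p * g p - f p * Yd g p) / g p ^ 2 :=
  fderiv_div_apply hf hg hp _

lemma E1d_div (hf : DifferentiableAt ℝ f p) (hg : DifferentiableAt ℝ g p) (hp : g p ≠ 0) :
    E1d u (fun z => f z / g z) p = (E1d u f p * g p - f p * E1d u g p) / g p ^ 2 := by
  rw [E1d, E1d, E1d, Xd_div hf hg hp, Yd_div hf hg hp]
  ring

lemma Filter.EventuallyEq.E1d_eq (h : f =ᶠ[𝓝 p] g) : E1d u f p = E1d u g p := by
  simp only [E1d, Xd, Yd, h.fderiv_eq]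

lemma Qdist_eq (hu : ContDiffAt ℝ 2 u p) (hg : gradH u p ≠ 0) :
    Qdist u p = (E1d u (gradH u) p - 4 * Td u p) / gradH u p := by
  have hgd := differentiableAt_gradH hu hg
  have hcomm : Xd (Yd u) p = Yd (Xd u) p - 4 * Td u p := by linarith [Xd_Yd_sub_Yd_Xd hu]
  rw [Qdist, Xd_div (differentiableAt_Yd hu) hgd hg, Yd_div (differentiableAt_Xd hu) hgd hg,
    E1d, hcomm]
  field_simp
  ring

lemma Kgauss_eq_of_Td_eventually_eq_one (hT : ∀ᶠ z in 𝓝 p, Td u z = 1)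
    (hgd : DifferentiableAt ℝ (gradH u) p) (hg : gradH u p ≠ 0) :
    Kgauss u p = 4 * (E1d u (gradH u) p - 4) / gradH u p ^ 2 := by
  have hquot : (fun z => Td u z / gradH u z) =ᶠ[𝓝 p] fun z => 1 / gradH u z :=
    hT.mono fun z hz => by simp only [hz]
  have hE : E1d u (fun z => Td u z / gradH u z) p = -E1d u (gradH u) p / gradH u p ^ 2 := by
    rw [hquot.E1d_eq, E1d_div (differentiableAt_const 1) hgd hg]
    simp [E1d, Xd, Yd]
  rw [Kgauss, hE, hT.self_of_nhds]
  field_simp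
  ring

end

/-- For a surface normalized by `Tu ≡ 1` in the Heisenberg group, the horizontal
Gauss curvature and the symplectic distortion satisfy `K = (4/‖∇_H u‖)·Q`;
in particular `K = 0 ↔ Q = 0` at noncharacteristic points. -/
theorem kgauss_eq_qdist_of_Tu_eq_one
    (U : Set (ℝ × ℝ × ℝ)) (hU : IsOpen U) (u : ℝ × ℝ × ℝ → ℝ)
    (hu : ContDiffOn ℝ 2 u U) (hT : ∀ p ∈ U, Td u p = 1) :
    ∀ p ∈ U, gradH u p ≠ 0 →
      Kgauss u p = (4 / gradH u p) * Qdist u p ∧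
      (Kgauss u p = 0 ↔ Qdist u p = 0) := by
  intro p hp hg
  have hup : ContDiffAt ℝ 2 u p := hu.contDiffAt (hU.mem_nhds hp)
  have hTp : ∀ᶠ z in 𝓝 p, Td u z = 1 := eventually_of_mem (hU.mem_nhds hp) hT
  have key : Kgauss u p = 4 / gradH u p * Qdist u p := by
    rw [Kgauss_eq_of_Td_eventually_eq_one hTp (differentiableAt_gradH hup hg) hg,
      Qdist_eq hup hg, hTp.self_of_nhds]
    field_simp
  refine ⟨key, ?_⟩
  rw [key, mul_eq_zero, or_iff_right (div_ne_zero four_ne_zero hg)]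
end

section
/- Let h ≠ 0 be a real constant and let f be a C² real function on an open interval I ⊆ (0,∞) with f'(r) ≠ 0 for all r ∈ I. If −(4r³ f''(r) + f'(r)³)/(r (4r² + f'(r)²)^{3/2}) = h for all r ∈ I (i.e., the surface of revolution t = f(√(x²+y²)) in the Heisenberg group has constant horizontal mean curvature h on I), then there exists a constant C ∈ ℝ such that for all r ∈ I one has 16 r² − (2hr² + C)² > 0 and f'(r)² (16 r² − (2hr² + C)²) = 4 r² (2hr² + C)². -/
/-!
Along the profile, `F(r) = 4 r f'(r) / √(4 r² + f'(r)²) + 2 h r²` is a first integral: its derivative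
is `4 r (h - H(r))`, so it is constant where `H ≡ h`. Writing the constant as `-C`, the relation
`2 h r² + C = -4 r f' / √(4 r² + f'²)` is, after squaring, the claimed identity, and it forces
`(2 h r² + C)² < 16 r²` because `r > 0`.
-/

open Real Set

noncomputable section

/-- The horizontal mean curvature at radius `r` of the surface of revolution `t = f(|z|)`, with
`p = f'(r)` and `q = f''(r)`. -/
def horizontalMeanCurvature (r p q : ℝ) : ℝ :=
  -(4 * r ^ 3 * q + p ^ 3) / (r * (4 * r ^ 2 + p ^ 2) ^ ((3 : ℝ) / 2))

def firstIntegral (h : ℝ) (u : ℝ → ℝ) (r : ℝ) : ℝ :=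
  4 * r * u r / √(4 * r ^ 2 + u r ^ 2) + 2 * h * r ^ 2

end

theorem four_mul_sq_add_sq_pos {r : ℝ} (hr : r ≠ 0) (p : ℝ) : 0 < 4 * r ^ 2 + p ^ 2 := by
  positivity

theorem hasDerivAt_firstIntegral (h : ℝ) {u : ℝ → ℝ} {u' r : ℝ} (hu : HasDerivAt u u' r)
    (hr : r ≠ 0) :
    HasDerivAt (firstIntegral h u) (4 * r * (h - horizontalMeanCurvature r (u r) u')) r := by
  have hS : 0 < 4 * r ^ 2 + u r ^ 2 := four_mul_sq_add_sq_pos hr (u r)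
  have hnum : HasDerivAt (fun x => 4 * x * u x) (4 * u r + 4 * r * u') r :=
    (((hasDerivAt_id r).const_mul 4).mul hu).congr_deriv (by simp)
  have hrad : HasDerivAt (fun x => 4 * x ^ 2 + u x ^ 2) (8 * r + 2 * u r * u') r :=
    (((hasDerivAt_pow 2 r).const_mul 4).add (hu.pow 2)).congr_deriv (by push_cast; ring)
  have hquad : HasDerivAt (fun x => 2 * h * x ^ 2) (4 * h * r) r :=
    ((hasDerivAt_pow 2 r).const_mul (2 * h)).congr_deriv (by push_cast; ring)
  refine ((hnum.div (hrad.sqrt hS.ne') (sqrt_pos.2 hS).ne').add hquad).congr_deriv ?_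
  have hpow : (4 * r ^ 2 + u r ^ 2) ^ ((3 : ℝ) / 2) = √(4 * r ^ 2 + u r ^ 2) ^ 3 := by
    rw [rpow_div_two_eq_sqrt _ hS.le]
    exact_mod_cast rpow_natCast _ 3
  rw [horizontalMeanCurvature, hpow]
  have hs := sqrt_pos.2 hS
  have hs2 := sq_sqrt hS.le
  generalize √(4 * r ^ 2 + u r ^ 2) = s at hs hs2 ⊢
  field_simp
  linear_combination (2 * u r + 2 * r * u') * hs2

theorem sq_mul_eq_of_firstIntegral_eq {h K r : ℝ} {u : ℝ → ℝ} (hr : r ≠ 0)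
    (hK : firstIntegral h u r = K) :
    (2 * h * r ^ 2 - K) ^ 2 * (4 * r ^ 2 + u r ^ 2) = 16 * r ^ 2 * u r ^ 2 := by
  have hS := four_mul_sq_add_sq_pos hr (u r)
  rw [← hK, firstIntegral, sub_add_cancel_right, neg_sq, div_pow, sq_sqrt hS.le]
  field_simp
  ring

theorem sq_lt_of_sq_mul_eq {r p c : ℝ} (hr : r ≠ 0)
    (hc : c ^ 2 * (4 * r ^ 2 + p ^ 2) = 16 * r ^ 2 * p ^ 2) : c ^ 2 < 16 * r ^ 2 := by
  have hlt : c ^ 2 * (4 * r ^ 2 + p ^ 2) < 16 * r ^ 2 * (4 * r ^ 2 + p ^ 2) := by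
    rw [hc]
    nlinarith [pow_pos (sq_pos_of_ne_zero hr) 2]
  exact lt_of_mul_lt_mul_right hlt (four_mul_sq_add_sq_pos hr p).le

theorem ContDiffOn.hasDerivAt_deriv {f : ℝ → ℝ} {s : Set ℝ} {x : ℝ} (hf : ContDiffOn ℝ 2 f s)
    (hs : IsOpen s) (hx : x ∈ s) : HasDerivAt (deriv f) (deriv (deriv f) x) x :=
  (((hf.deriv_of_isOpen hs (by norm_num)).differentiableOn one_ne_zero).differentiableAt
    (hs.mem_nhds hx)).hasDerivAt

theorem constant_horizontal_mean_curvature_revolution_general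
    (h : ℝ) (a b : ℝ) (ha : 0 ≤ a) (f : ℝ → ℝ)
    (hf : ContDiffOn ℝ 2 f (Set.Ioo a b))
    (hH : ∀ r ∈ Set.Ioo a b,
      -(4 * r ^ 3 * deriv (deriv f) r + (deriv f r) ^ 3) /
          (r * (4 * r ^ 2 + (deriv f r) ^ 2) ^ ((3 : ℝ) / 2)) = h) :
    ∃ C : ℝ, ∀ r ∈ Set.Ioo a b,
      16 * r ^ 2 - (2 * h * r ^ 2 + C) ^ 2 > 0 ∧
      (deriv f r) ^ 2 * (16 * r ^ 2 - (2 * h * r ^ 2 + C) ^ 2) =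
        4 * r ^ 2 * (2 * h * r ^ 2 + C) ^ 2 := by
  have hr_ne : ∀ r ∈ Ioo a b, r ≠ 0 := fun r hr => (ha.trans_lt hr.1).ne'
  have hF : ∀ r ∈ Ioo a b, HasDerivAt (firstIntegral h (deriv f)) 0 r := fun r hr => by
    have hH' : horizontalMeanCurvature r (deriv f r) (deriv (deriv f) r) = h := hH r hr
    simpa [hH'] using hasDerivAt_firstIntegral h (hf.hasDerivAt_deriv isOpen_Ioo hr) (hr_ne r hr)
  obtain ⟨K, hK⟩ := isOpen_Ioo.exists_is_const_of_deriv_eq_zero isPreconnected_Ioo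
    (fun r hr => (hF r hr).differentiableAt.differentiableWithinAt) (fun r hr => (hF r hr).deriv)
  refine ⟨-K, fun r hr => ?_⟩
  have hc := sq_mul_eq_of_firstIntegral_eq (hr_ne r hr) (hK r hr)
  simp only [← sub_eq_add_neg]
  exact ⟨sub_pos.2 (sq_lt_of_sq_mul_eq (hr_ne r hr) hc), by linear_combination -hc⟩

/-- First integral of the constant horizontal mean curvature equation for
surfaces of revolution `t = f(√(x²+y²))` in the Heisenberg group, `h ≠ 0`. -/
theorem constant_horizontal_mean_curvature_revolution
    (h : ℝ) (hh : h ≠ 0) (a b : ℝ) (ha : 0 ≤ a) (f : ℝ → ℝ)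
    (hf : ContDiffOn ℝ 2 f (Set.Ioo a b))
    (hf' : ∀ r ∈ Set.Ioo a b, deriv f r ≠ 0)
    (hH : ∀ r ∈ Set.Ioo a b,
      -(4 * r ^ 3 * deriv (deriv f) r + (deriv f r) ^ 3) /
          (r * (4 * r ^ 2 + (deriv f r) ^ 2) ^ ((3 : ℝ) / 2)) = h) :
    ∃ C : ℝ, ∀ r ∈ Set.Ioo a b,
      16 * r ^ 2 - (2 * h * r ^ 2 + C) ^ 2 > 0 ∧
      (deriv f r) ^ 2 * (16 * r ^ 2 - (2 * h * r ^ 2 + C) ^ 2) =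
        4 * r ^ 2 * (2 * h * r ^ 2 + C) ^ 2 :=
  constant_horizontal_mean_curvature_revolution_general h a b ha f hf hH
end

section
/- Let q be a real constant and let f be a C² real function on an open interval I ⊆ (0,∞). If the surface of revolution a = f(ρ) in the affine-additive group has constant symplectic distortion q on I, i.e., 2(2ρ f''(ρ)(2(ρ²+1)f'(ρ) − 1) − 4 f'(ρ)² + 4 f'(ρ) − 1) = q·(4(ρ²+1)f'(ρ)² − 4 f'(ρ) + 1)^{3/2} for all ρ ∈ I, then there exists a constant c₁ ∈ ℝ such that for all ρ ∈ I: ρ/√(4(ρ²+1)f'(ρ)² − 4 f'(ρ) + 1) = c₁ − qρ/2. -/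
/-! Put `D(ρ) = 4(ρ²+1)f'(ρ)² − 4f'(ρ) + 1 = (2ρf')² + (2f'−1)²`, which is positive for `ρ > 0`.
Differentiating, `(ρ/√D)' = (2D − ρD')/(2D^{3/2})`, and `2D − ρD'` is minus the numerator of the
symplectic distortion; so constant distortion `q` says `(ρ/√D)' = −q/2`, which integrates on the
interval. -/

open Set

lemma four_mul_sq_add_one_mul_sq_sub_pos {ρ : ℝ} (hρ : ρ ≠ 0) (x : ℝ) :
    0 < 4 * (ρ ^ 2 + 1) * x ^ 2 - 4 * x + 1 := by
  have hsum : 4 * (ρ ^ 2 + 1) * x ^ 2 - 4 * x + 1 = (2 * ρ * x) ^ 2 + (2 * x - 1) ^ 2 := by ring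
  rw [hsum]
  rcases eq_or_ne x 0 with rfl | hx
  · norm_num
  · have : 0 < (2 * ρ * x) ^ 2 := by positivity
    positivity

lemma ContDiffOn.hasDerivAt_deriv_of_isOpen {𝕜 F : Type*} [NontriviallyNormedField 𝕜]
    [NormedAddCommGroup F] [NormedSpace 𝕜 F] {f : 𝕜 → F} {s : Set 𝕜} (hf : ContDiffOn 𝕜 2 f s)
    (hs : IsOpen s) {x : 𝕜} (hx : x ∈ s) : HasDerivAt (deriv f) (deriv (deriv f) x) x :=
  ((hf.deriv_of_isOpen (m := 1) hs (by norm_num)).differentiableOn one_ne_zero x hx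
    |>.differentiableAt (hs.mem_nhds hx)).hasDerivAt

lemma hasDerivAt_div_sqrt_of_hasDerivAt {u : ℝ → ℝ} {u' ρ : ℝ} (hu : HasDerivAt u u' ρ)
    (hD : 0 < 4 * (ρ ^ 2 + 1) * u ρ ^ 2 - 4 * u ρ + 1) :
    HasDerivAt (fun r => r / √(4 * (r ^ 2 + 1) * u r ^ 2 - 4 * u r + 1))
      (-(2 * (2 * ρ * u' * (2 * (ρ ^ 2 + 1) * u ρ - 1) - 4 * u ρ ^ 2 + 4 * u ρ - 1)) /
        (2 * (4 * (ρ ^ 2 + 1) * u ρ ^ 2 - 4 * u ρ + 1) ^ ((3 : ℝ) / 2))) ρ := by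
  have hD' : HasDerivAt (fun r => 4 * (r ^ 2 + 1) * u r ^ 2 - 4 * u r + 1)
      (4 * (2 * ρ) * u ρ ^ 2 + 4 * (ρ ^ 2 + 1) * (2 * u ρ * u') - 4 * u') ρ := by
    have hpoly : HasDerivAt (fun r : ℝ => 4 * (r ^ 2 + 1)) (4 * (2 * ρ)) ρ := by
      simpa using ((hasDerivAt_pow 2 ρ).add_const 1).const_mul (4 : ℝ)
    have hsq : HasDerivAt (fun r => u r ^ 2) (2 * u ρ * u') ρ := by
      simpa using hu.fun_pow 2
    exact ((hpoly.mul hsq).sub (hu.const_mul 4)).add_const 1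
  have hsqrt_pos := Real.sqrt_pos.mpr hD
  refine ((hasDerivAt_id' ρ).fun_div (hD'.sqrt hD.ne') hsqrt_pos.ne').congr_deriv ?_
  have hsqrt_sq := Real.sq_sqrt hD.le
  rw [Real.rpow_div_two_eq_sqrt _ hD.le, Real.rpow_ofNat]
  generalize √(4 * (ρ ^ 2 + 1) * u ρ ^ 2 - 4 * u ρ + 1) = s at hsqrt_sq hsqrt_pos ⊢
  field_simp
  linear_combination 2 * hsqrt_sq

/-- First integral of the constant symplectic distortion equation for
surfaces of revolution `a = f(ρ)` in the affine-additive group. -/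
theorem aa_constant_symplectic_distortion
    (q : ℝ) (a b : ℝ) (ha : 0 ≤ a) (f : ℝ → ℝ)
    (hf : ContDiffOn ℝ 2 f (Set.Ioo a b))
    (hQ : ∀ ρ ∈ Set.Ioo a b,
      2 * (2 * ρ * deriv (deriv f) ρ * (2 * (ρ ^ 2 + 1) * deriv f ρ - 1) -
          4 * (deriv f ρ) ^ 2 + 4 * deriv f ρ - 1) =
        q * (4 * (ρ ^ 2 + 1) * (deriv f ρ) ^ 2 - 4 * deriv f ρ + 1) ^ ((3 : ℝ) / 2)) :
    ∃ c₁ : ℝ, ∀ ρ ∈ Set.Ioo a b,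
      ρ / Real.sqrt (4 * (ρ ^ 2 + 1) * (deriv f ρ) ^ 2 - 4 * deriv f ρ + 1) =
        c₁ - q * ρ / 2 := by
  have hpos (ρ) (hρ : ρ ∈ Ioo a b) : 0 < 4 * (ρ ^ 2 + 1) * deriv f ρ ^ 2 - 4 * deriv f ρ + 1 :=
    four_mul_sq_add_one_mul_sq_sub_pos (ha.trans_lt hρ.1).ne' _
  have hv (ρ) (hρ : ρ ∈ Ioo a b) : HasDerivAt
      (fun r => r / √(4 * (r ^ 2 + 1) * deriv f r ^ 2 - 4 * deriv f r + 1)) (-q / 2) ρ := by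
    refine (hasDerivAt_div_sqrt_of_hasDerivAt (hf.hasDerivAt_deriv_of_isOpen isOpen_Ioo hρ)
      (hpos ρ hρ)).congr_deriv ?_
    rw [hQ ρ hρ, ← neg_mul, mul_div_mul_right _ _ (Real.rpow_pos_of_pos (hpos ρ hρ) _).ne']
  obtain ⟨c, hc⟩ := isOpen_Ioo.exists_eq_add_of_deriv_eq isPreconnected_Ioo
    (fun ρ hρ => (hv ρ hρ).differentiableAt.differentiableWithinAt)
    (differentiableOn_id.const_mul (-q / 2)) fun ρ hρ => by simp [(hv ρ hρ).deriv]
  exact ⟨c, fun ρ hρ => (hc hρ).trans (by simp only [id]; ring)⟩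
end
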